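/- arXiv:2208.07659 — 11 statements merged into one kernel-verified Lean document; each statement's English description precedes it below -/
import Mathlib

section
/- Let X be a finite set of alternatives, let k ≥ 2 be an integer, and let (𝓑, c) be a complete data set (𝓑 consists of all nonempty subsets of X). Then (𝓑, c) is rationalizable with k-th order CLA if and only if c satisfies SARP^k and WARP(LA^k). -/
/-- A strict preference relation: complete on distinct elements, transitive, asymmetric. -/
def StrictPref {X : Type*} (r : X → X → Prop) : Prop :=
  (∀ x y : X, x ≠ y → r x y ∨ r y x) ∧
  (∀ x y z : X, r x y → r y z → r x z) ∧
  (∀ x y : X, r x y → ¬ r y x)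

/-- An attention filter: for every nonempty budget `B`, `Γ B` is a nonempty subset of `B`,
and removing an unconsidered alternative does not change the consideration set. -/
def AttentionFilter {X : Type*} [DecidableEq X] (Γ : Finset X → Finset X) : Prop :=
  ∀ B : Finset X, B.Nonempty →
    (Γ B).Nonempty ∧ Γ B ⊆ B ∧ ∀ x ∈ B, x ∉ Γ B → Γ (B.erase x) = Γ B

/-- `(r, Γ)` is a rationalizing pair for the data set `(𝓑, c)` with `k`-th order CLA. -/
def Rationalizes {X : Type*} [DecidableEq X] (𝓑 : Set (Finset X)) (c : Finset X → X)
    (k : ℕ) (r : X → X → Prop) (Γ : Finset X → Finset X) : Prop :=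
  StrictPref r ∧ AttentionFilter Γ ∧
  (∀ B : Finset X, B.Nonempty → min B.card k ≤ (Γ B).card) ∧
  ∀ B ∈ 𝓑, c B ∈ Γ B ∧ ∀ y ∈ Γ B, y ≠ c B → r (c B) y

/-- The data set `(𝓑, c)` is rationalizable with `k`-th order CLA. -/
def RationalizableCLA {X : Type*} [DecidableEq X] (𝓑 : Set (Finset X))
    (c : Finset X → X) (k : ℕ) : Prop :=
  ∃ (r : X → X → Prop) (Γ : Finset X → Finset X), Rationalizes 𝓑 c k r Γ

/-- `x` is `k`-th order directly chosen over `y`. -/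
def DirectlyChosen {X : Type*} [DecidableEq X] (𝓑 : Set (Finset X)) (c : Finset X → X)
    (k : ℕ) (x y : X) : Prop :=
  x ≠ y ∧ ∃ B ∈ 𝓑, B.card ≤ k ∧ x ∈ B ∧ y ∈ B ∧ c B = x

/-- SARP^k: if `x` is `k`-th order indirectly chosen over `y`, then `y` is not
`k`-th order directly chosen over `x`. -/
def SARPk {X : Type*} [DecidableEq X] (𝓑 : Set (Finset X)) (c : Finset X → X)
    (k : ℕ) : Prop :=
  ∀ x y : X, Relation.TransGen (DirectlyChosen 𝓑 c k) x y → ¬ DirectlyChosen 𝓑 c k y x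

/-- WARP(LA^k). -/
def WARPLAk {X : Type*} [DecidableEq X] (𝓑 : Set (Finset X)) (c : Finset X → X)
    (k : ℕ) : Prop :=
  ∀ S ∈ 𝓑, ∀ T ∈ 𝓑, ∀ x y : X, x ≠ y → x ∈ S ∩ T → y ∈ S ∩ T →
    T.card ≤ k → c S = x → c T = y → S.erase y ∈ 𝓑 → c (S.erase y) = x

theorem cla_characterization {X : Type*} [Fintype X] [DecidableEq X]
    (𝓑 : Set (Finset X)) (c : Finset X → X) (k : ℕ) (hk : 2 ≤ k)
    (hcomplete : 𝓑 = {B : Finset X | B.Nonempty})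
    (hchoice : ∀ B ∈ 𝓑, c B ∈ B) :
    RationalizableCLA 𝓑 c k ↔ SARPk 𝓑 c k ∧ WARPLAk 𝓑 c k := by
  classical
  have hBmem : ∀ B : Finset X, B ∈ 𝓑 ↔ B.Nonempty := by
    intro B; rw [hcomplete]; rfl
  constructor
  · -- forward direction
    rintro ⟨r, Γ, ⟨hcompl, htrans, hasymm⟩, hAF, hsize, hrat⟩
    -- small budgets are fully considered
    have hfull : ∀ B ∈ 𝓑, B.card ≤ k → Γ B = B := by
      intro B hB hBk
      have hne : B.Nonempty := (hBmem B).1 hB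
      have hsub := (hAF B hne).2.1
      have hc := hsize B hne
      rw [min_eq_left hBk] at hc
      exact Finset.eq_of_subset_of_card_le hsub hc
    have hDr : ∀ x y : X, DirectlyChosen 𝓑 c k x y → r x y := by
      rintro x y ⟨hxy, B, hB, hBk, hxB, hyB, hcB⟩
      have hfB := hfull B hB hBk
      have := (hrat B hB).2 y (by rw [hfB]; exact hyB) (by rw [hcB]; exact hxy.symm)
      rwa [hcB] at this
    have hTr : ∀ x y : X, Relation.TransGen (DirectlyChosen 𝓑 c k) x y → r x y := by
      intro x y h
      induction h with
      | single h => exact hDr _ _ h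
      | tail _ h ih => exact htrans _ _ _ ih (hDr _ _ h)
    constructor
    · intro x y h hd
      exact hasymm _ _ (hTr x y h) (hDr _ _ hd)
    · intro S hS T hT x y hxy hxST hyST hTk hcS hcT hSe
      have hxS : x ∈ S := (Finset.mem_inter.1 hxST).1
      have hxT : x ∈ T := (Finset.mem_inter.1 hxST).2
      have hyS : y ∈ S := (Finset.mem_inter.1 hyST).1
      have hSne : S.Nonempty := (hBmem S).1 hS
      have hfT := hfull T hT hTk
      have hryx : r y x := by
        have := (hrat T hT).2 x (by rw [hfT]; exact hxT) (by rw [hcT]; exact hxy)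
        rwa [hcT] at this
      have hyΓ : y ∉ Γ S := by
        intro hyΓ
        have := (hrat S hS).2 y hyΓ (by rw [hcS]; exact hxy.symm)
        rw [hcS] at this
        exact hasymm _ _ this hryx
      have hΓe : Γ (S.erase y) = Γ S := (hAF S hSne).2.2 y hyS hyΓ
      by_contra hne
      have h1 : c (S.erase y) ∈ Γ S := hΓe ▸ (hrat (S.erase y) hSe).1
      have hr1 : r x (c (S.erase y)) := by
        have := (hrat S hS).2 (c (S.erase y)) h1 (by rw [hcS]; exact hne)
        rwa [hcS] at this
      have hxΓ : x ∈ Γ (S.erase y) := by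
        rw [hΓe]; exact hcS ▸ (hrat S hS).1
      have hr2 : r (c (S.erase y)) x :=
        (hrat (S.erase y) hSe).2 x hxΓ (fun h => hne h.symm)
      exact hasymm _ _ hr1 hr2
  · -- backward direction
    rintro ⟨hSARP, hWARP⟩
    set D := DirectlyChosen 𝓑 c k with hD
    set P := Relation.TransGen D with hP
    have hirr : ∀ x : X, ¬ P x x := by
      intro x hx
      obtain ⟨z, hxz, hzx⟩ := Relation.TransGen.head'_iff.1 hx
      rcases Relation.reflTransGen_iff_eq_or_transGen.1 hzx with rfl | htg
      · exact hxz.1 rfl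
      · exact hSARP z x htg hxz
    -- reflexive closure of P is a partial order
    have hpo : IsPartialOrder X (fun a b => P a b ∨ a = b) := by
      refine { refl := fun a => Or.inr rfl, trans := ?_, antisymm := ?_ }
      · rintro a b cc (hab | rfl) (hbc | rfl)
        · exact Or.inl (Relation.TransGen.trans hab hbc)
        · exact Or.inl hab
        · exact Or.inl hbc
        · exact Or.inr rfl
      · rintro a b (hab | rfl) (hba | h)
        · exact absurd (Relation.TransGen.trans hab hba) (hirr a)
        · exact h.symm
        · rfl
        · rfl
    obtain ⟨s, hlin, hext⟩ := @extend_partialOrder X (fun a b => P a b ∨ a = b) hpo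
    haveI := hlin
    set r : X → X → Prop := fun a b => s a b ∧ a ≠ b with hr
    have hPr : ∀ a b : X, P a b → r a b := by
      intro a b h
      refine ⟨hext _ _ (Or.inl h), ?_⟩
      rintro rfl
      exact hirr a h
    have hSP : StrictPref r := by
      refine ⟨?_, ?_, ?_⟩
      · intro a b hab
        rcases total_of s a b with h | h
        · exact Or.inl ⟨h, hab⟩
        · exact Or.inr ⟨h, hab.symm⟩
      · rintro a b cc ⟨hab, hab'⟩ ⟨hbc, hbc'⟩
        refine ⟨_root_.trans hab hbc, ?_⟩
        rintro rfl
        exact hab' (antisymm hab hbc)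
      · rintro a b ⟨hab, hab'⟩ ⟨hba, _⟩
        exact hab' (antisymm hab hba)
    set Γ : Finset X → Finset X := fun B => B.filter (fun y => ¬ D y (c B)) with hΓ
    have hcBmem : ∀ B : Finset X, B.Nonempty → c B ∈ Γ B := by
      intro B hne
      refine Finset.mem_filter.2 ⟨hchoice B ((hBmem B).2 hne), fun h => h.1 rfl⟩
    -- small budgets are fully considered
    have hsmall : ∀ B : Finset X, B.Nonempty → B.card ≤ k → Γ B = B := by
      intro B hne hBk
      have hB : B ∈ 𝓑 := (hBmem B).2 hne
      apply Finset.filter_true_of_mem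
      intro y hyB hyD
      rcases eq_or_ne y (c B) with rfl | hne'
      · exact hyD.1 rfl
      · have hDcy : D (c B) y := ⟨hne'.symm, B, hB, hBk, hchoice B hB, hyB, rfl⟩
        exact hSARP (c B) y (Relation.TransGen.single hDcy) hyD
    -- removing a revealed-dominating element does not change the choice
    have herase : ∀ (B : Finset X) (x : X), x ∈ B → D x (c B) → c (B.erase x) = c B := by
      intro B x hxB hDx
      obtain ⟨hxc, T, hT, hTk, hxT, hcT, hcTx⟩ := hDx
      have hB : B ∈ 𝓑 := (hBmem B).2 ⟨x, hxB⟩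
      have hcBB : c B ∈ B := hchoice B hB
      have hcBe : c B ∈ B.erase x := Finset.mem_erase.2 ⟨fun h => hxc h.symm, hcBB⟩
      exact hWARP B hB T hT (c B) x (fun h => hxc h.symm)
        (Finset.mem_inter.2 ⟨hcBB, hcT⟩) (Finset.mem_inter.2 ⟨hxB, hxT⟩)
        hTk rfl hcTx ((hBmem _).2 ⟨c B, hcBe⟩)
    -- attention filter property
    have hAF : AttentionFilter Γ := by
      intro B hne
      refine ⟨⟨c B, hcBmem B hne⟩, Finset.filter_subset _ _, ?_⟩
      intro x hxB hxΓ
      have hDx : D x (c B) := by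
        by_contra h
        exact hxΓ (Finset.mem_filter.2 ⟨hxB, h⟩)
      have hce : c (B.erase x) = c B := herase B x hxB hDx
      calc Γ (B.erase x) = (B.erase x).filter (fun y => ¬ D y (c B)) := by rw [hΓ]; simp [hce]
        _ = (B.filter (fun y => ¬ D y (c B))).erase x := by rw [Finset.filter_erase]
        _ = Γ B := Finset.erase_eq_of_notMem hxΓ
    -- peeling: removing any subset of revealed-dominating elements keeps the choice
    have hpeel : ∀ (B : Finset X) (V : Finset X),
        V ⊆ B.filter (fun y => D y (c B)) → c (B \ V) = c B := by
      intro B V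
      induction V using Finset.induction_on with
      | empty => intro _; rw [Finset.sdiff_empty]
      | @insert a V haV ih =>
        intro hsub
        have hsub' : V ⊆ B.filter (fun y => D y (c B)) :=
          fun z hz => hsub (Finset.mem_insert_of_mem hz)
        have hceq := ih hsub'
        have haU := hsub (Finset.mem_insert_self a V)
        have haB : a ∈ B := (Finset.mem_filter.1 haU).1
        have haD : D a (c B) := (Finset.mem_filter.1 haU).2
        have haBV : a ∈ B \ V := Finset.mem_sdiff.2 ⟨haB, haV⟩
        rw [Finset.sdiff_insert]
        rw [← hceq] at haD ⊢
        exact herase (B \ V) a haBV haD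
    -- cardinality bound
    have hsize : ∀ B : Finset X, B.Nonempty → min B.card k ≤ (Γ B).card := by
      intro B hne
      rcases le_or_gt B.card k with hBk | hBk
      · rw [hsmall B hne hBk]
        exact min_le_left _ _
      · rw [min_eq_right hBk.le]
        by_contra hlt
        push_neg at hlt
        set U := B.filter (fun y => D y (c B)) with hU
        have hUsub : U ⊆ B := Finset.filter_subset _ _
        have hcard : (Γ B).card + U.card = B.card := by
          rw [hΓ, hU]
          rw [add_comm]
          exact Finset.card_filter_add_card_filter_not (fun y => D y (c B))
        have hUcard : B.card - k < U.card := by omega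
        obtain ⟨V, hVU, hVcard⟩ := Finset.exists_subset_card_eq
          (show B.card - k ≤ U.card by omega)
        have hVB : V ⊆ B := hVU.trans hUsub
        have hBV : (B \ V).card = k := by
          rw [Finset.card_sdiff_of_subset hVB, hVcard]
          omega
        have hcBV : c (B \ V) = c B := hpeel B V hVU
        obtain ⟨u, huU, huV⟩ : ∃ u ∈ U, u ∉ V := by
          by_contra h
          push_neg at h
          have := Finset.card_le_card h
          omega
        have huB : u ∈ B := hUsub huU
        have huD : D u (c B) := (Finset.mem_filter.1 huU).2
        have huBV : u ∈ B \ V := Finset.mem_sdiff.2 ⟨huB, huV⟩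
        have hcBBV : c B ∈ B \ V := by
          refine Finset.mem_sdiff.2 ⟨hchoice B ((hBmem B).2 hne), fun h => ?_⟩
          exact (Finset.mem_filter.1 (hVU h)).2.1 rfl
        have hDcu : D (c B) u :=
          ⟨fun h => huD.1 h.symm, B \ V, (hBmem _).2 ⟨u, huBV⟩, hBV.le, hcBBV, huBV, hcBV⟩
        exact hSARP (c B) u (Relation.TransGen.single hDcu) huD
    refine ⟨r, Γ, hSP, hAF, hsize, ?_⟩
    intro B hB
    have hne : B.Nonempty := (hBmem B).1 hB
    refine ⟨hcBmem B hne, ?_⟩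
    intro y hyΓ hyc
    have hyB : y ∈ B := (Finset.mem_filter.1 hyΓ).1
    have hyD : ¬ D y (c B) := (Finset.mem_filter.1 hyΓ).2
    -- use the pair {y, c B}
    set T : Finset X := insert y {c B} with hT
    have hyT : y ∈ T := Finset.mem_insert_self _ _
    have hcBT : c B ∈ T := Finset.mem_insert_of_mem (Finset.mem_singleton_self _)
    have hTne : T.Nonempty := ⟨y, hyT⟩
    have hTmem : T ∈ 𝓑 := (hBmem T).2 hTne
    have hTk : T.card ≤ k := by
      have : T.card ≤ 2 := by
        rw [hT]
        exact (Finset.card_insert_le _ _).trans (by simp)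
      omega
    have hcTT : c T ∈ T := hchoice T hTmem
    rcases Finset.mem_insert.1 hcTT with hcy | hcc
    · exact absurd ⟨hyc, T, hTmem, hTk, hyT, hcBT, hcy⟩ hyD
    · rw [Finset.mem_singleton] at hcc
      have : D (c B) y := ⟨fun h => hyc h.symm, T, hTmem, hTk, hcBT, hyT, hcc⟩
      exact hPr _ _ (Relation.TransGen.single this)
end

section
/- Let X be a finite set of alternatives, let k ≥ 2 be an integer, and let (𝓑, c) be a complete data set. If (𝓑, c) is rationalizable with k-th order CLA, then c satisfies SARP^k. -/
theorem cla_implies_sarpk {X : Type*} [Fintype X] [DecidableEq X]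
    (𝓑 : Set (Finset X)) (c : Finset X → X) (k : ℕ) (hk : 2 ≤ k)
    (hcomplete : 𝓑 = {B : Finset X | B.Nonempty})
    (hchoice : ∀ B ∈ 𝓑, c B ∈ B)
    (hrat : RationalizableCLA 𝓑 c k) :
    SARPk 𝓑 c k := by
  obtain ⟨r, Γ, ⟨⟨hcompl, htrans, hasym⟩, hAF, hmin, hch⟩⟩ := hrat
  have key : ∀ x y, DirectlyChosen 𝓑 c k x y → r x y := by
    rintro x y ⟨hne, B, hB𝓑, hBk, hxB, hyB, hcB⟩
    have hBne : B.Nonempty := ⟨x, hxB⟩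
    have hΓB : Γ B = B := by
      apply Finset.eq_of_subset_of_card_le ((hAF B hBne).2.1)
      have h := hmin B hBne
      rwa [min_eq_left hBk] at h
    have := (hch B hB𝓑).2 y (by rw [hΓB]; exact hyB)
    rw [hcB] at this
    exact this (fun h => hne h.symm)
  intro x y hxy hyx
  have hrxy : r x y := by
    clear hyx
    induction hxy with
    | single h => exact key _ _ h
    | tail _ h ih => exact htrans _ _ _ ih (key _ _ h)
  exact hasym _ _ hrxy (key _ _ hyx)
end

section
/- Let X be a finite set of alternatives, let k ≥ 2 be an integer, and let (𝓑, c) be a complete data set. If (𝓑, c) is rationalizable with k-th order CLA, then c satisfies WARP(LA^k). -/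
theorem cla_implies_warplak {X : Type*} [Fintype X] [DecidableEq X]
    (𝓑 : Set (Finset X)) (c : Finset X → X) (k : ℕ) (hk : 2 ≤ k)
    (hcomplete : 𝓑 = {B : Finset X | B.Nonempty})
    (hchoice : ∀ B ∈ 𝓑, c B ∈ B)
    (hrat : RationalizableCLA 𝓑 c k) :
    WARPLAk 𝓑 c k := by
  obtain ⟨r, Γ, ⟨hcomp, htrans, hasym⟩, hAF, hsize, hchoose⟩ := hrat
  intro S hS T hT x y hxy hxST hyST hTk hcS hcT hSe
  simp only [Finset.mem_inter] at hxST hyST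
  obtain ⟨hxS, hxT⟩ := hxST
  obtain ⟨hyS, hyT⟩ := hyST
  have hSne : S.Nonempty := by rw [hcomplete] at hS; exact hS
  have hTne : T.Nonempty := by rw [hcomplete] at hT; exact hT
  have hΓT : Γ T = T := by
    refine Finset.eq_of_subset_of_card_le (hAF T hTne).2.1 ?_
    have := hsize T hTne
    rwa [min_eq_left hTk] at this
  have hryx : r y x := by
    have := (hchoose T hT).2 x (by rw [hΓT]; exact hxT) (by rw [hcT]; exact hxy)
    rwa [hcT] at this
  have hyΓS : y ∉ Γ S := by
    intro hmem
    have := (hchoose S hS).2 y hmem (by rw [hcS]; exact hxy.symm)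
    rw [hcS] at this
    exact hasym x y this hryx
  have hΓeq : Γ (S.erase y) = Γ S := (hAF S hSne).2.2 y hyS hyΓS
  have hxΓS : x ∈ Γ S := hcS ▸ (hchoose S hS).1
  by_contra hne
  have hcmem : c (S.erase y) ∈ Γ S := hΓeq ▸ (hchoose (S.erase y) hSe).1
  have h1 : r x (c (S.erase y)) := by
    have := (hchoose S hS).2 (c (S.erase y)) hcmem (by rw [hcS]; exact hne)
    rwa [hcS] at this
  have h2 : r (c (S.erase y)) x :=
    (hchoose (S.erase y) hSe).2 x (hΓeq ▸ hxΓS) (fun h => hne h.symm)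
  exact hasym _ _ h1 h2
end

section
/- Let X be a finite set of alternatives, let k ≥ 2 be an integer, and let (𝓑, c) be a complete data set. If c satisfies SARP^k and WARP(LA^k), then (𝓑, c) is rationalizable with k-th order CLA; moreover, a rationalizing pair is given by the preference ≻ defined by x ≻ y iff c({x, y}) = x, together with the attention filter Γ(S) = {c(S)} ∪ {y ∈ S : c({c(S), y}) = c(S)}. -/
theorem sarpk_warplak_implies_cla {X : Type*} [Fintype X] [DecidableEq X]
    (𝓑 : Set (Finset X)) (c : Finset X → X) (k : ℕ) (hk : 2 ≤ k)
    (hcomplete : 𝓑 = {B : Finset X | B.Nonempty})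
    (hchoice : ∀ B ∈ 𝓑, c B ∈ B)
    (hsarp : SARPk 𝓑 c k) (hwarp : WARPLAk 𝓑 c k) :
    Rationalizes 𝓑 c k (fun a b => a ≠ b ∧ c {a, b} = a)
      (fun S => insert (c S) (S.filter fun y => c {c S, y} = c S)) := by
  subst hcomplete
  simp only [Set.mem_setOf_eq] at hchoice
  set Γ : Finset X → Finset X := fun S => insert (c S) (S.filter fun y => c {c S, y} = c S)
    with hΓ
  have hpair : ∀ x y : X, c {x, y} = x ∨ c {x, y} = y := by
    intro x y
    have h := hchoice {x, y} ⟨x, by simp⟩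
    simpa using h
  have hpaircard : ∀ x y : X, ({x, y} : Finset X).card ≤ k := by
    intro x y
    refine le_trans ?_ hk
    exact (Finset.card_insert_le _ _).trans (by simp)
  have hpairmem : ∀ x y : X, ({x, y} : Finset X) ∈ {B : Finset X | B.Nonempty} :=
    fun x y => ⟨x, by simp⟩
  have hdir_pair : ∀ x y : X, x ≠ y → c {x, y} = x →
      DirectlyChosen {B : Finset X | B.Nonempty} c k x y := by
    intro x y hxy hcxy
    exact ⟨hxy, {x, y}, hpairmem x y, hpaircard x y, by simp, by simp, hcxy⟩
  have hcΓ : ∀ B : Finset X, c B ∈ Γ B := fun B => Finset.mem_insert_self _ _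
  have hΓsub : ∀ B : Finset X, B.Nonempty → Γ B ⊆ B := by
    intro B hB w hw
    simp only [hΓ, Finset.mem_insert, Finset.mem_filter] at hw
    rcases hw with rfl | hw
    · exact hchoice B hB
    · exact hw.1
  have step : ∀ B : Finset X, B.Nonempty → ∀ z ∈ B, z ∉ Γ B →
      c (B.erase z) = c B ∧ Γ (B.erase z) = Γ B := by
    intro B hB z hz hzΓ
    simp only [hΓ, Finset.mem_insert, Finset.mem_filter, not_or, not_and] at hzΓ
    obtain ⟨hzc, hzf⟩ := hzΓ
    have hcz : c {c B, z} = z := (hpair (c B) z).resolve_left (hzf hz)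
    have hcBz : c B ≠ z := fun h => hzc h.symm
    have herase : B.erase z ∈ {B : Finset X | B.Nonempty} :=
      ⟨c B, Finset.mem_erase.mpr ⟨hcBz, hchoice B hB⟩⟩
    have hce : c (B.erase z) = c B := by
      refine hwarp B hB {c B, z} (hpairmem _ _) (c B) z hcBz ?_ ?_ (hpaircard _ _) rfl hcz herase
      · simp [hchoice B hB]
      · simp [hz]
    refine ⟨hce, ?_⟩
    have hzfil : z ∉ B.filter (fun y => c {c B, y} = c B) := by
      simp only [Finset.mem_filter, not_and]
      exact hzf
    simp only [hΓ, hce]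
    congr 1
    rw [Finset.filter_erase, Finset.erase_eq_of_notMem hzfil]
  have chain : ∀ B : Finset X, B.Nonempty → ∀ D : Finset X, D ⊆ B \ Γ B →
      c (B \ D) = c B ∧ Γ (B \ D) = Γ B := by
    intro B hB D
    induction D using Finset.induction_on with
    | empty => intro _; simp
    | @insert a D ha ih =>
      intro hsub
      have hsubD : D ⊆ B \ Γ B := (Finset.subset_insert a D).trans hsub
      obtain ⟨hcD, hΓD⟩ := ih hsubD
      have haB : a ∈ B \ Γ B := hsub (Finset.mem_insert_self a D)
      have hane : c B ∈ B \ D := by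
        refine Finset.mem_sdiff.mpr ⟨hchoice B hB, fun hmem => ?_⟩
        exact (Finset.mem_sdiff.mp (hsubD hmem)).2 (hcΓ B)
      have hBDne : (B \ D).Nonempty := ⟨c B, hane⟩
      have haBD : a ∈ B \ D := Finset.mem_sdiff.mpr ⟨(Finset.mem_sdiff.mp haB).1, ha⟩
      have haΓ : a ∉ Γ (B \ D) := by rw [hΓD]; exact (Finset.mem_sdiff.mp haB).2
      obtain ⟨h1, h2⟩ := step (B \ D) hBDne a haBD haΓ
      rw [Finset.sdiff_insert]
      exact ⟨h1.trans hcD, h2.trans hΓD⟩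
  have hcard : ∀ B : Finset X, B.Nonempty → min B.card k ≤ (Γ B).card := by
    intro B hB
    by_contra hlt
    push_neg at hlt
    have hΓB : (Γ B).card < B.card := lt_of_lt_of_le hlt (min_le_left _ _)
    have hΓk : (Γ B).card + 1 ≤ k := lt_of_lt_of_le hlt (min_le_right _ _)
    have hnsub : ¬ B ⊆ Γ B := fun h => absurd (Finset.card_le_card h) (not_le.mpr hΓB)
    obtain ⟨z, hzB, hzΓ⟩ := Finset.not_subset.mp hnsub
    have hAeq : B \ ((B \ Γ B).erase z) = insert z (Γ B) := by
      ext w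
      have hw' : w ∈ Γ B → w ∈ B := fun h => hΓsub B hB h
      have hw2 : w = z → w ∈ B := fun h => h ▸ hzB
      simp only [Finset.mem_sdiff, Finset.mem_erase, Finset.mem_insert]
      tauto
    obtain ⟨hcA, -⟩ := chain B hB ((B \ Γ B).erase z) ((Finset.erase_subset _ _))
    rw [hAeq] at hcA
    have hAcard : (insert z (Γ B)).card ≤ k := by
      have := Finset.card_insert_le z (Γ B)
      omega
    have hAmem : insert z (Γ B) ∈ {B : Finset X | B.Nonempty} :=
      ⟨z, Finset.mem_insert_self _ _⟩
    have hzc : z ≠ c B := fun h => hzΓ (h ▸ hcΓ B)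
    have hcz : c {c B, z} = z := by
      simp only [hΓ, Finset.mem_insert, Finset.mem_filter, not_or, not_and] at hzΓ
      exact (hpair (c B) z).resolve_left (hzΓ.2 hzB)
    have hd1 : DirectlyChosen {B : Finset X | B.Nonempty} c k (c B) z :=
      ⟨fun h => hzc h.symm, insert z (Γ B), hAmem, hAcard,
        hcA ▸ hchoice _ hAmem, Finset.mem_insert_self _ _, hcA⟩
    have hd2 : DirectlyChosen {B : Finset X | B.Nonempty} c k z (c B) :=
      ⟨hzc, {c B, z}, hpairmem _ _, hpaircard _ _, by simp, by simp, hcz⟩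
    exact hsarp (c B) z (Relation.TransGen.single hd1) hd2
  refine ⟨⟨?_, ?_, ?_⟩, ?_, hcard, ?_⟩
  · intro x y hxy
    rcases hpair x y with h | h
    · exact Or.inl ⟨hxy, h⟩
    · exact Or.inr ⟨hxy.symm, by rwa [Finset.pair_comm]⟩
  · rintro x y z ⟨hxy, hcxy⟩ ⟨hyz, hcyz⟩
    have hxz : x ≠ z := by
      rintro rfl
      rw [Finset.pair_comm] at hcyz
      exact hxy (hcxy.symm.trans hcyz)
    refine ⟨hxz, ?_⟩
    rcases hpair x z with h | h
    · exact h
    · exfalso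
      have d1 := hdir_pair x y hxy hcxy
      have d2 := hdir_pair y z hyz hcyz
      have d3 : DirectlyChosen {B : Finset X | B.Nonempty} c k z x :=
        ⟨fun hh => hxz hh.symm, {x, z}, hpairmem _ _, hpaircard _ _, by simp, by simp, h⟩
      exact hsarp x z (Relation.TransGen.head d1 (Relation.TransGen.single d2)) d3
  · rintro x y ⟨hxy, h1⟩ ⟨hyx, h2⟩
    rw [Finset.pair_comm] at h2
    exact hxy (h1.symm.trans h2)
  · intro B hB
    exact ⟨⟨c B, hcΓ B⟩, hΓsub B hB, fun x hx hxΓ => (step B hB x hx hxΓ).2⟩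
  · intro B hB
    refine ⟨hcΓ B, ?_⟩
    intro y hy hyne
    simp only [hΓ, Finset.mem_insert, Finset.mem_filter] at hy
    rcases hy with rfl | ⟨hyB, hcy⟩
    · exact absurd rfl hyne
    · exact ⟨Ne.symm hyne, hcy⟩
end

section
/- Let X be a finite set of alternatives, let k ≥ 2 be an integer, and let (𝓑, c) be a complete data set. If c satisfies SARP^k, then the binary relation ≻ on X defined by x ≻ y iff x ≠ y and c({x, y}) = x is a strict preference relation (complete on distinct elements, transitive, and asymmetric). -/
theorem sarpk_binary_relation_strictPref {X : Type*} [Fintype X] [DecidableEq X]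
    (𝓑 : Set (Finset X)) (c : Finset X → X) (k : ℕ) (hk : 2 ≤ k)
    (hcomplete : 𝓑 = {B : Finset X | B.Nonempty})
    (hchoice : ∀ B ∈ 𝓑, c B ∈ B)
    (hsarp : SARPk 𝓑 c k) :
    StrictPref (fun a b : X => a ≠ b ∧ c {a, b} = a) := by
  have hmem : ∀ B : Finset X, B.Nonempty → B ∈ 𝓑 := by
    intro B hB; rw [hcomplete]; exact hB
  have hdc : ∀ x y : X, x ≠ y → c {x, y} = x → DirectlyChosen 𝓑 c k x y := by
    intro x y hne hc
    refine ⟨hne, {x, y}, hmem _ ⟨x, by simp⟩, ?_, by simp, by simp, hc⟩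
    calc ({x, y} : Finset X).card ≤ ({y} : Finset X).card + 1 := Finset.card_insert_le _ _
    _ ≤ k := by simpa using hk
  refine ⟨?_, ?_, ?_⟩
  · intro x y hne
    have := hchoice {x, y} (hmem _ ⟨x, by simp⟩)
    simp only [Finset.mem_insert, Finset.mem_singleton] at this
    rcases this with h | h
    · exact Or.inl ⟨hne, h⟩
    · right; refine ⟨hne.symm, ?_⟩
      rw [Finset.pair_comm]; exact h
  · rintro x y z ⟨hxy, hcxy⟩ ⟨hyz, hcyz⟩
    have dxy := hdc x y hxy hcxy
    have dyz := hdc y z hyz hcyz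
    have hxz : x ≠ z := by
      rintro rfl
      exact hsarp x y (Relation.TransGen.single dxy) dyz
    refine ⟨hxz, ?_⟩
    have := hchoice {x, z} (hmem _ ⟨x, by simp⟩)
    simp only [Finset.mem_insert, Finset.mem_singleton] at this
    rcases this with h | h
    · exact h
    · exfalso
      have dzx : DirectlyChosen 𝓑 c k z x := by
        refine hdc z x hxz.symm ?_
        rw [Finset.pair_comm]; exact h
      exact hsarp x z ((Relation.TransGen.single dxy).tail dyz) dzx
  · rintro x y ⟨hxy, hcxy⟩ ⟨-, hcyx⟩
    rw [Finset.pair_comm] at hcyx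
    exact hxy (hcxy.symm.trans hcyx)
end

section
/- Let X be a finite set of alternatives, k ≥ 1 an integer, and (𝓑, c) a data set with 𝓑 = {B₁, …, Bₙ} finite. Then (𝓑, c) is rationalizable with k-th order CLA if and only if there exists a feasible configuration for (𝓑, c, k). -/
/-- A feasible configuration for the finite data set `(B₁, …, Bₙ, c)` and threshold `k`
(the big-M-free formulation of the mixed integer program, with `A i = {x_j : δ i j = 1}`). -/
def FeasibleConfig {X : Type*} [DecidableEq X] {n : ℕ} (B : Fin n → Finset X)
    (c : Finset X → X) (k : ℕ) (u : X → ℝ) (A : Fin n → Finset X) : Prop :=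
  (∀ i, c (B i) ∈ A i) ∧ (∀ i, A i ⊆ B i) ∧
  (∀ i, ∀ y ∈ A i, y ≠ c (B i) → u y < u (c (B i))) ∧
  (∀ i, min k (B i).card ≤ (A i).card) ∧
  (∀ i j, c (B i) ≠ c (B j) → c (B i) ∈ B i ∩ B j → c (B j) ∈ B i ∩ B j →
    (A i ∩ (B i \ B j)).Nonempty ∨ (A j ∩ (B j \ B i)).Nonempty)

/-!
Necessity: rank alternatives by the number of alternatives they beat and take `Aᵢ = Γ(Bᵢ)`.
If `Γ(Bᵢ) ⊆ Bⱼ` and `Γ(Bⱼ) ⊆ Bᵢ`, removing unconsidered alternatives one at a time gives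
`Γ(Bᵢ) = Γ(Bᵢ ∩ Bⱼ) = Γ(Bⱼ)`, a consideration set containing both choices, so they coincide.

Sufficiency: condition (iii) says that if the intervals `[Aᵢ, Bᵢ]` and `[Aⱼ, Bⱼ]` of the
lattice of subsets meet, then `c(Bᵢ) = c(Bⱼ)`; so both `Aᵢ` and `Aⱼ` can be replaced by
`Aᵢ ∪ Aⱼ` without losing feasibility. Once meeting intervals share their bottom,
`Γ(S) = Aᵢ` for `S ∈ [Aᵢ, Bᵢ]` and `Γ(S) = S` otherwise is a well-defined attention filter,
and `u` refined by an arbitrary tie-break is a rationalizing preference.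
-/

open Finset

section

variable {X : Type*}

theorem strictPref_of_injective {α : Type*} [LinearOrder α] {f : X → α}
    (hf : Function.Injective f) : StrictPref fun x y => f y < f x :=
  ⟨fun _ _ hxy => (hf.ne hxy).symm.lt_or_gt, fun _ _ _ hxy hyz => hyz.trans hxy,
    fun _ _ hxy hyx => hxy.asymm hyx⟩

theorem card_filter_lt_of_rel [Fintype X] {r : X → X → Prop} [DecidableRel r]
    (htrans : ∀ x y z, r x y → r y z → r x z) (hirrefl : ∀ x, ¬ r x x) {x y : X}
    (hxy : r x y) : #{z | r y z} < #{z | r x z} := by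
  refine card_lt_card ⟨fun z hz => ?_, fun hsub => hirrefl y ?_⟩
  · simp only [mem_filter, mem_univ, true_and] at hz ⊢
    exact htrans x y z hxy hz
  · simpa using hsub (by simpa using hxy)

section Intervals

variable {ι : Type*}

def CoherentIntervals (A B : ι → Finset X) : Prop :=
  ∀ i j S, A i ⊆ S → S ⊆ B i → A j ⊆ S → S ⊆ B j → A i = A j

open Classical in
noncomputable def intervalFilter (A B : ι → Finset X) (S : Finset X) : Finset X :=
  if h : ∃ i, A i ⊆ S ∧ S ⊆ B i then A h.choose else S

variable {A B : ι → Finset X} {S : Finset X}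

theorem intervalFilter_eq (hcoh : CoherentIntervals A B) {i : ι} (hAS : A i ⊆ S)
    (hSB : S ⊆ B i) : intervalFilter A B S = A i := by
  have hex : ∃ i, A i ⊆ S ∧ S ⊆ B i := ⟨i, hAS, hSB⟩
  rw [intervalFilter, dif_pos hex]
  exact hcoh _ _ S hex.choose_spec.1 hex.choose_spec.2 hAS hSB

theorem intervalFilter_of_not_exists (h : ¬ ∃ i, A i ⊆ S ∧ S ⊆ B i) :
    intervalFilter A B S = S := by
  rw [intervalFilter, dif_neg h]

theorem min_card_le_card_intervalFilter (hcoh : CoherentIntervals A B) {k : ℕ}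
    (hcard : ∀ i, min k #(B i) ≤ #(A i)) (S : Finset X) :
    min #S k ≤ #(intervalFilter A B S) := by
  by_cases h : ∃ i, A i ⊆ S ∧ S ⊆ B i
  · obtain ⟨i, hAS, hSB⟩ := h
    rw [intervalFilter_eq hcoh hAS hSB, min_comm]
    exact (min_le_min_left k (card_le_card hSB)).trans (hcard i)
  · rw [intervalFilter_of_not_exists h]
    exact min_le_left _ _

variable [DecidableEq X]

theorem attentionFilter_intervalFilter (hcoh : CoherentIntervals A B)
    (hA : ∀ i, (A i).Nonempty) : AttentionFilter (intervalFilter A B) := by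
  intro S hS
  by_cases h : ∃ i, A i ⊆ S ∧ S ⊆ B i
  · obtain ⟨i, hAS, hSB⟩ := h
    rw [intervalFilter_eq hcoh hAS hSB]
    refine ⟨hA i, hAS, fun x _ hxA => ?_⟩
    exact intervalFilter_eq hcoh (subset_erase.2 ⟨hAS, hxA⟩) ((erase_subset x S).trans hSB)
  · rw [intervalFilter_of_not_exists h]
    exact ⟨hS, subset_rfl, fun x hxS hxS' => absurd hxS hxS'⟩

def mergePair [DecidableEq ι] (A : ι → Finset X) (i j : ι) (l : ι) : Finset X :=
  if l = i ∨ l = j then A i ∪ A j else A l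

theorem subset_mergePair [DecidableEq ι] (A : ι → Finset X) (i j l : ι) :
    A l ⊆ mergePair A i j l := by
  unfold mergePair
  split_ifs with hl
  · rcases hl with rfl | rfl
    exacts [subset_union_left, subset_union_right]
  · exact subset_rfl

theorem mergePair_ne [DecidableEq ι] {i j : ι} (hne : A i ≠ A j) : mergePair A i j ≠ A := by
  intro h
  have hi := congrFun h i
  have hj := congrFun h j
  simp only [mergePair, true_or, or_true, if_true] at hi hj
  exact hne (hi.symm.trans hj)

theorem sum_card_sdiff_lt [Fintype ι] {A' : ι → Finset X} (hAA' : ∀ i, A i ⊆ A' i)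
    (hsub : ∀ i, A' i ⊆ B i) (hne : A' ≠ A) : ∑ i, #(B i \ A' i) < ∑ i, #(B i \ A i) := by
  obtain ⟨i, hi⟩ := Function.ne_iff.1 hne
  have hcard : ∀ i, #(B i \ A' i) + #(A' i) = #(B i \ A i) + #(A i) := fun i => by
    rw [card_sdiff_add_card_eq_card (hsub i),
      card_sdiff_add_card_eq_card ((hAA' i).trans (hsub i))]
  refine sum_lt_sum (fun i _ => ?_) ⟨i, mem_univ i, ?_⟩
  · have := card_le_card (hAA' i)
    have := hcard i
    omega
  · have := card_lt_card ((hAA' i).ssubset_of_ne (Ne.symm hi))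
    have := hcard i
    omega

end Intervals

variable [DecidableEq X]

theorem AttentionFilter.eq_of_subset_of_subset {Γ : Finset X → Finset X}
    (hΓ : AttentionFilter Γ) {S T : Finset X} (hS : S.Nonempty) (hΓT : Γ S ⊆ T)
    (hTS : T ⊆ S) : Γ T = Γ S := by
  induction S using Finset.strongInduction with
  | H S ih =>
    obtain rfl | hTS' := hTS.eq_or_ssubset
    · rfl
    obtain ⟨x, hxS, hxT⟩ := exists_of_ssubset hTS'
    have herase : Γ (S.erase x) = Γ S := (hΓ S hS).2.2 x hxS fun h => hxT (hΓT h)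
    have hT : T ⊆ S.erase x := subset_erase.2 ⟨hTS, hxT⟩
    obtain ⟨y, hy⟩ := (hΓ S hS).1
    rw [← herase]
    exact ih _ (erase_ssubset hxS) ⟨y, hT (hΓT hy)⟩ (herase ▸ hΓT) hT

theorem Rationalizes.choice_eq {𝓑 : Set (Finset X)} {c : Finset X → X} {k : ℕ}
    {r : X → X → Prop} {Γ : Finset X → Finset X} (h : Rationalizes 𝓑 c k r Γ)
    {S T : Finset X} (hS𝓑 : S ∈ 𝓑) (hT𝓑 : T ∈ 𝓑) (hS : S.Nonempty) (hT : T.Nonempty)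
    (hST : Γ S ⊆ T) (hTS : Γ T ⊆ S) : c S = c T := by
  obtain ⟨⟨-, -, hasymm⟩, hΓ, -, hrat⟩ := h
  have hS' : Γ (S ∩ T) = Γ S :=
    hΓ.eq_of_subset_of_subset hS (subset_inter (hΓ S hS).2.1 hST) inter_subset_left
  have hT' : Γ (S ∩ T) = Γ T :=
    hΓ.eq_of_subset_of_subset hT (subset_inter hTS (hΓ T hT).2.1) inter_subset_right
  have hcT : c T ∈ Γ S := hS' ▸ hT' ▸ (hrat T hT𝓑).1
  have hcS : c S ∈ Γ T := hT' ▸ hS' ▸ (hrat S hS𝓑).1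
  by_contra hne
  exact hasymm _ _ ((hrat S hS𝓑).2 _ hcT (Ne.symm hne)) ((hrat T hT𝓑).2 _ hcS hne)

theorem inter_sdiff_nonempty_iff {A B C : Finset X} (hAB : A ⊆ B) :
    (A ∩ (B \ C)).Nonempty ↔ ¬ A ⊆ C := by
  rw [← inter_sdiff_assoc, inter_eq_left.2 hAB, sdiff_nonempty]

theorem Rationalizes.feasibleConfig [Fintype X] {n : ℕ} {B : Fin n → Finset X}
    {c : Finset X → X} {k : ℕ} {r : X → X → Prop} [DecidableRel r]
    {Γ : Finset X → Finset X} (h : Rationalizes (Set.range B) c k r Γ)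
    (hchoice : ∀ i, c (B i) ∈ B i) :
    FeasibleConfig B c k (fun x => (#{y | r x y} : ℝ)) fun i => Γ (B i) := by
  have ⟨⟨_, htrans, hasymm⟩, hΓ, hcard, hrat⟩ := h
  have hB : ∀ i, (B i).Nonempty := fun i => ⟨_, hchoice i⟩
  have hsub : ∀ i, Γ (B i) ⊆ B i := fun i => (hΓ _ (hB i)).2.1
  refine ⟨fun i => (hrat _ ⟨i, rfl⟩).1, hsub, fun i y hy hne => ?_,
    fun i => min_comm k _ ▸ hcard _ (hB i), fun i j hne _ _ => ?_⟩
  · exact Nat.cast_lt.2 <| card_filter_lt_of_rel htrans (fun x hx => hasymm x x hx hx)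
      ((hrat _ ⟨i, rfl⟩).2 y hy hne)
  · rw [inter_sdiff_nonempty_iff (hsub i), inter_sdiff_nonempty_iff (hsub j)]
    by_contra! hij
    exact hne (h.choice_eq ⟨i, rfl⟩ ⟨j, rfl⟩ (hB i) (hB j) hij.1 hij.2)

namespace FeasibleConfig

variable {n : ℕ} {B : Fin n → Finset X} {c : Finset X → X} {k : ℕ} {u : X → ℝ}
  {A : Fin n → Finset X}

theorem choice_eq (h : FeasibleConfig B c k u A) {i j : Fin n}
    (hij : A i ∪ A j ⊆ B i ∩ B j) : c (B i) = c (B j) := by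
  obtain ⟨hc, hsub, -, -, hmeet⟩ := h
  by_contra hne
  rcases hmeet i j hne (hij (mem_union_left _ (hc i))) (hij (mem_union_right _ (hc j))) with
    hi | hj
  · exact (inter_sdiff_nonempty_iff (hsub i)).1 hi
      fun x hx => (mem_inter.1 (hij (mem_union_left _ hx))).2
  · exact (inter_sdiff_nonempty_iff (hsub j)).1 hj
      fun x hx => (mem_inter.1 (hij (mem_union_right _ hx))).1

theorem mono {A' : Fin n → Finset X} (h : FeasibleConfig B c k u A)
    (hAA' : ∀ i, A i ⊆ A' i) (hsub : ∀ i, A' i ⊆ B i)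
    (hu : ∀ i, ∀ y ∈ A' i, y ≠ c (B i) → u y < u (c (B i))) : FeasibleConfig B c k u A' := by
  obtain ⟨hc, -, -, hcard, hmeet⟩ := h
  refine ⟨fun i => hAA' i (hc i), hsub, hu, fun i => (hcard i).trans (card_le_card (hAA' i)),
    fun i j hne hci hcj => ?_⟩
  exact (hmeet i j hne hci hcj).imp (·.mono (inter_subset_inter_right (hAA' i)))
    (·.mono (inter_subset_inter_right (hAA' j)))

theorem merge (h : FeasibleConfig B c k u A) {i j : Fin n}
    (hij : A i ∪ A j ⊆ B i ∩ B j) : FeasibleConfig B c k u (mergePair A i j) := by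
  have hcij := h.choice_eq hij
  refine h.mono (subset_mergePair A i j) (fun l => ?_) (fun l y hy hne => ?_)
  · unfold mergePair
    split_ifs with hl
    · rcases hl with rfl | rfl
      exacts [hij.trans inter_subset_left, hij.trans inter_subset_right]
    · exact h.2.1 l
  · have hu := h.2.2.1
    unfold mergePair at hy
    split_ifs at hy with hl
    · have hcl : c (B l) = c (B i) ∧ c (B l) = c (B j) := by
        rcases hl with rfl | rfl
        exacts [⟨rfl, hcij⟩, ⟨hcij.symm, rfl⟩]
      rw [hcl.1] at hne ⊢
      rcases mem_union.1 hy with hy | hy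
      · exact hu i y hy hne
      · exact hcij ▸ hu j y hy (hcij ▸ hne)
    · exact hu l y hy hne

theorem exists_coherent (h : FeasibleConfig B c k u A) :
    ∃ A', FeasibleConfig B c k u A' ∧ CoherentIntervals A' B := by
  induction hm : ∑ i, #(B i \ A i) using Nat.strong_induction_on generalizing A with
  | _ m ih =>
    by_cases hcoh : CoherentIntervals A B
    · exact ⟨A, h, hcoh⟩
    obtain ⟨i, j, S, hAiS, hSBi, hAjS, hSBj, hne⟩ : ∃ i j S, A i ⊆ S ∧ S ⊆ B i ∧ A j ⊆ S ∧
        S ⊆ B j ∧ A i ≠ A j := by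
      simpa [CoherentIntervals] using hcoh
    have hmerge := h.merge (union_subset hAiS hAjS |>.trans (subset_inter hSBi hSBj))
    exact ih _ (hm ▸ sum_card_sdiff_lt (subset_mergePair A i j) hmerge.2.1
      (mergePair_ne hne)) hmerge rfl

theorem rationalizableCLA [Fintype X] (h : FeasibleConfig B c k u A)
    (hcoh : CoherentIntervals A B) : RationalizableCLA (Set.range B) c k := by
  obtain ⟨hc, hsub, hu, hcard, -⟩ := h
  let f : X → ℝ ×ₗ Fin (Fintype.card X) := fun x => toLex (u x, Fintype.equivFin X x)
  have hf : Function.Injective f := fun x y hxy =>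
    (Fintype.equivFin X).injective (Prod.ext_iff.1 (toLex.injective hxy)).2
  refine ⟨_, _, strictPref_of_injective hf,
    attentionFilter_intervalFilter hcoh fun i => ⟨_, hc i⟩,
    fun S _ => min_card_le_card_intervalFilter hcoh hcard S, ?_⟩
  rintro _ ⟨i, rfl⟩
  rw [intervalFilter_eq hcoh (hsub i) subset_rfl]
  exact ⟨hc i, fun y hy hne => Prod.Lex.toLex_lt_toLex.2 (Or.inl (hu i y hy hne))⟩

end FeasibleConfig

end

theorem cla_iff_feasibleConfig_general {X : Type*} [Fintype X] [DecidableEq X] {n : ℕ}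
    (B : Fin n → Finset X) (c : Finset X → X) (k : ℕ)
    (hchoice : ∀ i, c (B i) ∈ B i) :
    RationalizableCLA (Set.range B) c k ↔
      ∃ (u : X → ℝ) (A : Fin n → Finset X), FeasibleConfig B c k u A := by
  classical
  constructor
  · rintro ⟨r, Γ, h⟩
    exact ⟨_, _, h.feasibleConfig hchoice⟩
  · rintro ⟨u, A, h⟩
    obtain ⟨A', h', hcoh⟩ := h.exists_coherent
    exact h'.rationalizableCLA hcoh

theorem cla_iff_feasibleConfig {X : Type*} [Fintype X] [DecidableEq X] {n : ℕ}
    (B : Fin n → Finset X) (c : Finset X → X) (k : ℕ) (hk : 1 ≤ k)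
    (hchoice : ∀ i, c (B i) ∈ B i) :
    RationalizableCLA (Set.range B) c k ↔
      ∃ (u : X → ℝ) (A : Fin n → Finset X), FeasibleConfig B c k u A :=
  cla_iff_feasibleConfig_general B c k hchoice
end

section
/- Let X be a finite set of alternatives and (𝓑, c) a data set rationalized by a strict preference relation ≻ and an attention filter Γ, i.e., for every B ∈ 𝓑, c(B) ∈ Γ(B) and c(B) ≻ y for every y ∈ Γ(B) ∖ {c(B)}. If B, B′ ∈ 𝓑 satisfy c(B) ≠ c(B′) and c(B), c(B′) ∈ B ∩ B′, then Γ(B) ∩ (B ∖ B′) ≠ ∅ or Γ(B′) ∩ (B′ ∖ B) ≠ ∅. -/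
/-!
If `Γ B` misses `B \ B'`, then deleting the alternatives of `B \ B'` one at a time never
deletes a considered alternative, so `Γ (B ∩ B') = Γ B`; symmetrically `Γ (B ∩ B') = Γ B'`.
Then `c B` and `c B'` are two distinct alternatives of the same consideration set, each
strictly preferred to the other, contradicting asymmetry.
-/

namespace AttentionFilter

variable {X : Type*} [DecidableEq X] {Γ : Finset X → Finset X}

theorem apply_eq_of_subset (hΓ : AttentionFilter Γ) {A B : Finset X} (hB : B.Nonempty)
    (hΓA : Γ B ⊆ A) (hAB : A ⊆ B) : Γ A = Γ B := by
  induction B using Finset.strongInduction with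
  | H B ih =>
    by_cases hBA : B ⊆ A
    · rw [Finset.Subset.antisymm hAB hBA]
    obtain ⟨x, hxB, hxA⟩ := Finset.not_subset.1 hBA
    obtain ⟨hΓne, hΓB, herase⟩ := hΓ B hB
    have hΓerase : Γ (B.erase x) = Γ B := herase x hxB fun hx => hxA (hΓA hx)
    have hsub : Γ B ⊆ B.erase x := fun y hy =>
      Finset.mem_erase.2 ⟨fun h => hxA (h ▸ hΓA hy), hΓB hy⟩
    rw [← hΓerase]
    exact ih _ (Finset.erase_ssubset hxB) (hΓne.mono hsub) (hΓerase ▸ hΓA)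
      fun y hy => Finset.mem_erase.2 ⟨fun h => hxA (h ▸ hy), hAB hy⟩

theorem apply_inter_eq (hΓ : AttentionFilter Γ) {B B' : Finset X} (hB : B.Nonempty)
    (h : Γ B ∩ (B \ B') = ∅) : Γ (B ∩ B') = Γ B := by
  have hΓB : Γ B ⊆ B := (hΓ B hB).2.1
  refine hΓ.apply_eq_of_subset hB (fun x hx => Finset.mem_inter.2 ⟨hΓB hx, ?_⟩)
    Finset.inter_subset_left
  by_contra hx'
  exact Finset.eq_empty_iff_forall_notMem.1 h x (by simp [hx, hΓB hx, hx'])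

end AttentionFilter

theorem attention_overlap_of_choice_reversal_general {X : Type*} [DecidableEq X]
    (𝓑 : Set (Finset X)) (c : Finset X → X)
    (r : X → X → Prop) (Γ : Finset X → Finset X)
    (hr : StrictPref r) (hΓ : AttentionFilter Γ)
    (hrat : ∀ B ∈ 𝓑, c B ∈ Γ B ∧ ∀ y ∈ Γ B, y ≠ c B → r (c B) y)
    (B B' : Finset X) (hB : B ∈ 𝓑) (hB' : B' ∈ 𝓑)
    (hne : c B ≠ c B') (h1 : c B ∈ B ∩ B') (h2 : c B' ∈ B ∩ B') :
    (Γ B ∩ (B \ B')).Nonempty ∨ (Γ B' ∩ (B' \ B)).Nonempty := by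
  by_contra! ⟨hmiss, hmiss'⟩
  have hΓeq : Γ B = Γ B' := by
    rw [← hΓ.apply_inter_eq ⟨_, (Finset.mem_inter.1 h1).1⟩ hmiss,
      ← hΓ.apply_inter_eq ⟨_, (Finset.mem_inter.1 h2).2⟩ hmiss', Finset.inter_comm]
  obtain ⟨hcB, hprefB⟩ := hrat B hB
  obtain ⟨hcB', hprefB'⟩ := hrat B' hB'
  exact hr.2.2 _ _ (hprefB (c B') (hΓeq ▸ hcB') hne.symm) (hprefB' (c B) (hΓeq ▸ hcB) hne)

theorem attention_overlap_of_choice_reversal {X : Type*} [Fintype X] [DecidableEq X]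
    (𝓑 : Set (Finset X)) (c : Finset X → X)
    (hchoice : ∀ B ∈ 𝓑, c B ∈ B)
    (r : X → X → Prop) (Γ : Finset X → Finset X)
    (hr : StrictPref r) (hΓ : AttentionFilter Γ)
    (hrat : ∀ B ∈ 𝓑, c B ∈ Γ B ∧ ∀ y ∈ Γ B, y ≠ c B → r (c B) y)
    (B B' : Finset X) (hB : B ∈ 𝓑) (hB' : B' ∈ 𝓑)
    (hne : c B ≠ c B') (h1 : c B ∈ B ∩ B') (h2 : c B' ∈ B ∩ B') :
    (Γ B ∩ (B \ B')).Nonempty ∨ (Γ B' ∩ (B' \ B)).Nonempty :=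
  attention_overlap_of_choice_reversal_general 𝓑 c r Γ hr hΓ hrat B B' hB hB' hne h1 h2
end

section
/- Let X be a finite set of alternatives, k ≥ 1 an integer, and (𝓑 = {B₁, …, Bₙ}, c) a finite data set that is rationalizable with k-th order CLA. Then for every x ∈ X there exists a lower-contour solution for x; in particular, for any rationalizing pair (≻, Γ), taking Aᵢ = Γ(Bᵢ), u : X → ℝ any utility representation of ≻, and s the indicator function of {x} ∪ {y ∈ X : x ≻ y} yields a lower-contour solution for x. -/
/-- A lower-contour solution for the distinguished alternative `x`:
a feasible configuration together with an indicator `s` with `s x` and such that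
considered alternatives inherit membership from the choice. -/
def LowerContourSol {X : Type*} [DecidableEq X] {n : ℕ} (B : Fin n → Finset X)
    (c : Finset X → X) (k : ℕ) (x : X) (u : X → ℝ) (A : Fin n → Finset X)
    (s : X → Prop) : Prop :=
  FeasibleConfig B c k u A ∧ s x ∧ ∀ i, ∀ y ∈ A i, s (c (B i)) → s y


/-! The pair `(Γ (B i), u)` built from a rationalizing pair is already feasible: the only
nontrivial constraint is (iii), and if it failed for budgets `B i`, `B j`, both consideration
sets would lie in `B i ∩ B j`, so the attention filter property would force
`Γ (B i) = Γ (B j)`; the two distinct choices would then each be preferred to the other.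
The indicator of the weak lower contour set of `x` is closed under passing from a choice to the
alternatives considered with it, by transitivity. On a finite `X`, the number of alternatives
worse than `a` is a utility representation. -/

namespace AttentionFilter

variable {X : Type*} [DecidableEq X] {Γ : Finset X → Finset X}

theorem eq_of_subset (hΓ : AttentionFilter Γ) {B S : Finset X} (hB : B.Nonempty)
    (hSB : S ⊆ B) (hΓS : Γ B ⊆ S) : Γ S = Γ B := by
  induction B using Finset.strongInduction with
  | _ B ih =>
    obtain rfl | hne := eq_or_ne S B
    · rfl
    obtain ⟨x, hxB, hxS⟩ := Finset.exists_of_ssubset (hSB.ssubset_of_ne hne)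
    have herase : Γ (B.erase x) = Γ B := (hΓ B hB).2.2 x hxB fun hx => hxS (hΓS hx)
    have hSerase : S ⊆ B.erase x := fun y hy =>
      Finset.mem_erase.2 ⟨fun h => hxS (h ▸ hy), hSB hy⟩
    obtain ⟨z, hz⟩ := (hΓ B hB).1
    rw [← herase] at hΓS ⊢
    exact ih _ (Finset.erase_ssubset hxB) ⟨z, hSerase (hΓS (herase ▸ hz))⟩ hSerase hΓS

theorem eq_of_subset_inter (hΓ : AttentionFilter Γ) {B B' : Finset X} (hB : B.Nonempty)
    (hB' : B'.Nonempty) (h : Γ B ⊆ B ∩ B') (h' : Γ B' ⊆ B ∩ B') : Γ B = Γ B' :=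
  (hΓ.eq_of_subset hB Finset.inter_subset_left h).symm.trans
    (hΓ.eq_of_subset hB' Finset.inter_subset_right h')

end AttentionFilter

namespace StrictPref

variable {X : Type*} {r : X → X → Prop}

theorem irrefl (hr : StrictPref r) (a : X) : ¬ r a a := fun h => hr.2.2 a a h h

theorem card_lt_card_of_rel [Fintype X] [DecidableRel r] (hr : StrictPref r) {a b : X}
    (hab : r a b) : (Finset.univ.filter (r b)).card < (Finset.univ.filter (r a)).card := by
  refine Finset.card_lt_card ((Finset.ssubset_iff_of_subset ?_).2 ⟨b, ?_, ?_⟩)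
  · intro y hy
    simp only [Finset.mem_filter, Finset.mem_univ, true_and] at hy ⊢
    exact hr.2.1 a b y hab hy
  · simpa using hab
  · simpa using hr.irrefl b

theorem exists_utility [Finite X] (hr : StrictPref r) :
    ∃ u : X → ℝ, ∀ a b, r a b ↔ u b < u a := by
  classical
  have := Fintype.ofFinite X
  refine ⟨fun a => ((Finset.univ.filter (r a)).card : ℝ), fun a b => ?_⟩
  simp only [Nat.cast_lt]
  refine ⟨hr.card_lt_card_of_rel, fun hlt => by_contra fun hab => ?_⟩
  obtain rfl | hne := eq_or_ne a b
  · exact lt_irrefl _ hlt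
  exact (hr.card_lt_card_of_rel ((hr.1 a b hne).resolve_left hab)).asymm hlt

end StrictPref

namespace Rationalizes

variable {X : Type*} [DecidableEq X] {n : ℕ} {B : Fin n → Finset X} {c : Finset X → X}
  {k : ℕ} {r : X → X → Prop} {Γ : Finset X → Finset X}

theorem feasibleConfig_s9 (hR : Rationalizes (Set.range B) c k r Γ)
    (hchoice : ∀ i, c (B i) ∈ B i) {u : X → ℝ} (hu : ∀ a b, r a b ↔ u b < u a) :
    FeasibleConfig B c k u (fun i => Γ (B i)) := by
  obtain ⟨hr, hΓ, hcard, hc⟩ := hR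
  have hne i : (B i).Nonempty := ⟨c (B i), hchoice i⟩
  have hmem i : c (B i) ∈ Γ (B i) := (hc (B i) ⟨i, rfl⟩).1
  have hpref i : ∀ y ∈ Γ (B i), y ≠ c (B i) → r (c (B i)) y := (hc (B i) ⟨i, rfl⟩).2
  have hsub i : Γ (B i) ⊆ B i := (hΓ (B i) (hne i)).2.1
  refine ⟨hmem, hsub, fun i y hy hyc => (hu _ _).1 (hpref i y hy hyc),
    fun i => min_comm k _ ▸ hcard (B i) (hne i), fun i j hcij _ _ => ?_⟩
  refine or_iff_not_and_not.2 fun ⟨hi, hj⟩ => ?_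
  have hinter {i j} (hij : ¬ (Γ (B i) ∩ (B i \ B j)).Nonempty) : Γ (B i) ⊆ B i ∩ B j :=
    fun y hy => Finset.mem_inter.2
      ⟨hsub i hy, by_contra fun hyj => hij ⟨y, by simp [hy, hsub i hy, hyj]⟩⟩
  have heq : Γ (B i) = Γ (B j) := hΓ.eq_of_subset_inter (hne i) (hne j) (hinter hi)
    (Finset.inter_comm (B j) (B i) ▸ hinter hj)
  exact hr.2.2 _ _ (hpref i _ (heq ▸ hmem j) (Ne.symm hcij)) (hpref j _ (heq ▸ hmem i) hcij)

theorem lowerContourSol (hR : Rationalizes (Set.range B) c k r Γ)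
    (hchoice : ∀ i, c (B i) ∈ B i) (x : X) {u : X → ℝ} (hu : ∀ a b, r a b ↔ u b < u a) :
    LowerContourSol B c k x u (fun i => Γ (B i)) (fun y => y = x ∨ r x y) := by
  refine ⟨hR.feasibleConfig_s9 hchoice hu, Or.inl rfl, fun i y hy hcx => ?_⟩
  obtain rfl | hyc := eq_or_ne y (c (B i))
  · exact hcx
  have hcy := (hR.2.2.2 (B i) ⟨i, rfl⟩).2 y hy hyc
  rcases hcx with hcx | hcx
  · exact Or.inr (hcx ▸ hcy)
  · exact Or.inr (hR.1.2.1 _ _ _ hcx hcy)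

end Rationalizes

theorem lowerContourSol_exists_general {X : Type*} [Fintype X] [DecidableEq X] {n : ℕ}
    (B : Fin n → Finset X) (c : Finset X → X) (k : ℕ)
    (hchoice : ∀ i, c (B i) ∈ B i)
    (hrat : RationalizableCLA (Set.range B) c k) :
    (∀ x : X, ∃ (u : X → ℝ) (A : Fin n → Finset X) (s : X → Prop),
        LowerContourSol B c k x u A s) ∧
    (∀ (x : X) (r : X → X → Prop) (Γ : Finset X → Finset X),
        Rationalizes (Set.range B) c k r Γ →
        ∀ u : X → ℝ, (∀ a b : X, r a b ↔ u b < u a) →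
        LowerContourSol B c k x u (fun i => Γ (B i)) (fun y => y = x ∨ r x y)) := by
  refine ⟨fun x => ?_, fun x r Γ hR u hu => hR.lowerContourSol hchoice x hu⟩
  obtain ⟨r, Γ, hR⟩ := hrat
  obtain ⟨u, hu⟩ := hR.1.exists_utility
  exact ⟨u, _, _, hR.lowerContourSol hchoice x hu⟩

theorem lowerContourSol_exists {X : Type*} [Fintype X] [DecidableEq X] {n : ℕ}
    (B : Fin n → Finset X) (c : Finset X → X) (k : ℕ) (hk : 1 ≤ k)
    (hchoice : ∀ i, c (B i) ∈ B i)
    (hrat : RationalizableCLA (Set.range B) c k) :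
    (∀ x : X, ∃ (u : X → ℝ) (A : Fin n → Finset X) (s : X → Prop),
        LowerContourSol B c k x u A s) ∧
    (∀ (x : X) (r : X → X → Prop) (Γ : Finset X → Finset X),
        Rationalizes (Set.range B) c k r Γ →
        ∀ u : X → ℝ, (∀ a b : X, r a b ↔ u b < u a) →
        LowerContourSol B c k x u (fun i => Γ (B i)) (fun y => y = x ∨ r x y)) :=
  lowerContourSol_exists_general B c k hchoice hrat
end

section
/- Let X be a finite set of alternatives, k ≥ 1 an integer, and (𝓑 = {B₁, …, Bₙ}, c) a finite data set that is rationalizable with k-th order CLA. Then for every x ∈ X, the minimum of |{y ∈ X : y ≠ x and s(y) = 1}| over all lower-contour solutions (u, (Aᵢ), s) for x equals the minimum of |{y ∈ X : x ≻ y}| over all rationalizing pairs (≻, Γ); in particular the lower bound produced by the program is tight, i.e., it is attained by the strict lower contour set of x under some rationalizing pair. -/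
/-!
A rationalizing pair `(≻, Γ)` gives a lower-contour solution with `u` counting the alternatives
below, `A i = Γ (B i)` and `s` the weak lower contour set of `x`. Condition (iii) holds because if
`Γ (B i)` and `Γ (B j)` both lay inside `B i ∩ B j`, the attention filter property would give
`Γ (B i) = Γ (B i ∩ B j) = Γ (B j)`, and each choice would beat the other.

Conversely, ranking alternatives lexicographically by `(¬ s, u)`, ties broken arbitrarily, keeps
the configuration feasible and puts everything outside `s` above `x`. Given a feasible configuration
with injective utility, say `B j` anchors a menu `D` if `D` arises from `B j` by deleting
alternatives better than `c (B j)`. By (iii) all budgets anchoring `D` have the same choice, and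
keeping the alternatives of `D` not better than it (all of `D` if nothing anchors `D`) is an
attention filter that contains `A j` and rationalizes the data.
-/

open Finset

section Ranking

variable {X : Type*}

theorem card_filter_rel_lt_of_rel [Fintype X] {r : X → X → Prop} [DecidableRel r]
    (htrans : ∀ a b c, r a b → r b c → r a c) (hirr : ∀ a, ¬ r a a) {a b : X} (hab : r a b) :
    #{z | r z a} < #{z | r z b} := by
  refine card_lt_card ((ssubset_iff_of_subset fun z hz => ?_).2 ⟨a, ?_, ?_⟩)
  · simp only [mem_filter, mem_univ, true_and] at hz ⊢
    exact htrans _ _ _ hz hab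
  · simpa using hab
  · simpa using hirr a

theorem exists_real_lt_iff_of_injective [Fintype X] {E : Type*} [LinearOrder E] {e : X → E}
    (he : Function.Injective e) :
    ∃ v : X → ℝ, Function.Injective v ∧ ∀ a b, v a < v b ↔ e a < e b := by
  classical
  let v : X → ℝ := fun a => #{z | e z < e a}
  have hv_lt : ∀ a b, e a < e b → v a < v b := fun a b hab => by
    simp only [v]
    exact_mod_cast card_filter_rel_lt_of_rel (r := fun z a => e z < e a)
      (fun _ _ _ => lt_trans) (fun _ => lt_irrefl _) hab
  have hv_iff : ∀ a b, v a < v b ↔ e a < e b := fun a b =>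
    ⟨lt_imp_lt_of_le_imp_le fun hba => hba.eq_or_lt.elim (fun h => by simp [v, h])
      fun h => (hv_lt b a h).le, hv_lt a b⟩
  refine ⟨v, fun a b hab => he (le_antisymm ?_ ?_), hv_iff⟩
  · exact not_lt.1 fun h => ((hv_iff b a).2 h).ne' hab
  · exact not_lt.1 fun h => ((hv_iff a b).2 h).ne hab

theorem strictPref_of_injective_s10 {E : Type*} [LinearOrder E] {u : X → E}
    (hu : Function.Injective u) : StrictPref (fun a b => u b < u a) :=
  ⟨fun _ _ hab => (lt_or_gt_of_ne (hu.ne hab)).symm, fun _ _ _ hab hbc => hbc.trans hab,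
    fun _ _ hab => hab.asymm⟩

end Ranking

section Rationalizes

variable {X : Type*} [DecidableEq X]

theorem AttentionFilter.eq_of_subset_of_subset_s10 {Γ : Finset X → Finset X} (hΓ : AttentionFilter Γ)
    {B C : Finset X} (hB : B.Nonempty) (hΓC : Γ B ⊆ C) (hCB : C ⊆ B) : Γ C = Γ B := by
  induction B using Finset.strongInduction with
  | H B ih =>
    obtain rfl | hne := eq_or_ne C B
    · rfl
    obtain ⟨z, hzB, hzC⟩ := exists_of_ssubset (hCB.ssubset_of_ne hne)
    have hz : Γ (B.erase z) = Γ B := (hΓ B hB).2.2 z hzB fun h => hzC (hΓC h)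
    have hCz : C ⊆ B.erase z := fun y hy => mem_erase.2 ⟨fun h => hzC (h ▸ hy), hCB hy⟩
    rw [← hz]
    exact ih _ (erase_ssubset hzB) ((hΓ B hB).1.mono (hΓC.trans hCz)) (hz ▸ hΓC) hCz

variable {𝓑 : Set (Finset X)} {c : Finset X → X} {k : ℕ} {r : X → X → Prop}
  {Γ : Finset X → Finset X}

theorem Rationalizes.inter_sdiff_nonempty_or (hR : Rationalizes 𝓑 c k r Γ)
    {B₁ B₂ : Finset X} (h₁ : B₁ ∈ 𝓑) (h₂ : B₂ ∈ 𝓑) (hne : c B₁ ≠ c B₂)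
    (hc₁ : c B₁ ∈ B₁ ∩ B₂) (hc₂ : c B₂ ∈ B₁ ∩ B₂) :
    (Γ B₁ ∩ (B₁ \ B₂)).Nonempty ∨ (Γ B₂ ∩ (B₂ \ B₁)).Nonempty := by
  obtain ⟨⟨-, -, hasymm⟩, hΓ, -, hbud⟩ := hR
  have hinter : ∀ {S T : Finset X}, c S ∈ S → ¬ (Γ S ∩ (S \ T)).Nonempty → Γ (S ∩ T) = Γ S := by
    intro S T hS hST
    refine hΓ.eq_of_subset_of_subset_s10 ⟨_, hS⟩ (fun z hz => ?_) inter_subset_left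
    have hzS := (hΓ S ⟨_, hS⟩).2.1 hz
    refine mem_inter.2 ⟨hzS, ?_⟩
    by_contra hzT
    exact hST ⟨z, mem_inter.2 ⟨hz, mem_sdiff.2 ⟨hzS, hzT⟩⟩⟩
  by_contra! h
  have hΓeq : Γ B₁ = Γ B₂ := by
    rw [← hinter (mem_of_mem_inter_left hc₁) (not_nonempty_iff_eq_empty.2 h.1), inter_comm,
      hinter (mem_of_mem_inter_right hc₂) (not_nonempty_iff_eq_empty.2 h.2)]
  exact hasymm _ _ ((hbud B₁ h₁).2 _ (hΓeq ▸ (hbud B₂ h₂).1) hne.symm)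
    ((hbud B₂ h₂).2 _ (hΓeq ▸ (hbud B₁ h₁).1) hne)

theorem Rationalizes.lowerContourSol_s10 [Fintype X] [DecidableRel r] {n : ℕ} {B : Fin n → Finset X}
    (hc : ∀ i, c (B i) ∈ B i) (hR : Rationalizes (Set.range B) c k r Γ) (x : X) :
    LowerContourSol B c k x (fun a => (#{z | r a z} : ℝ)) (fun i => Γ (B i))
      (fun y => y = x ∨ r x y) := by
  have hsdiff := fun i j => hR.inter_sdiff_nonempty_or (Set.mem_range_self i)
    (Set.mem_range_self j)
  obtain ⟨⟨-, htrans, hasymm⟩, hΓ, hsize, hbud⟩ := hR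
  have hbud' : ∀ i, c (B i) ∈ Γ (B i) ∧ ∀ y ∈ Γ (B i), y ≠ c (B i) → r (c (B i)) y :=
    fun i => hbud _ ⟨i, rfl⟩
  refine ⟨⟨fun i => (hbud' i).1, fun i => (hΓ _ ⟨_, hc i⟩).2.1, fun i y hy hne => ?_,
    fun i => min_comm k _ ▸ hsize _ ⟨_, hc i⟩, fun i j hne hci hcj => ?_⟩, Or.inl rfl, ?_⟩
  · dsimp only
    exact_mod_cast card_filter_rel_lt_of_rel (r := fun a b => r b a)
      (fun _ _ _ hab hbc => htrans _ _ _ hbc hab) (fun a h => hasymm a a h h)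
      ((hbud' i).2 y hy hne)
  · exact hsdiff i j hne hci hcj
  · rintro i y hy hsc
    obtain rfl | hne := eq_or_ne y (c (B i))
    · exact hsc
    have hcy := (hbud' i).2 y hy hne
    rcases hsc with rfl | hxc
    · exact Or.inr hcy
    · exact Or.inr (htrans _ _ _ hxc hcy)

end Rationalizes

section Anchors

variable {X : Type*} {n : ℕ} {B : Fin n → Finset X} {c : Finset X → X} {u : X → ℝ}

variable (B c u) in
def Anchors (j : Fin n) (D : Finset X) : Prop :=
  D ⊆ B j ∧ ∀ z ∈ B j, z ∉ D → u (c (B j)) < u z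

theorem anchors_self (i : Fin n) : Anchors B c u i (B i) :=
  ⟨subset_rfl, fun _ hz hz' => absurd hz hz'⟩

variable (B c u) in
open Classical in
noncomputable def anchorFilter (D : Finset X) : Finset X :=
  if h : ∃ j, Anchors B c u j D then {y ∈ D | u y ≤ u (c (B h.choose))} else D

theorem anchorFilter_of_not_anchors {D : Finset X} (h : ¬ ∃ j, Anchors B c u j D) :
    anchorFilter B c u D = D :=
  dif_neg h

end Anchors

section Feasible

variable {X : Type*} [DecidableEq X] {n : ℕ} {B : Fin n → Finset X} {c : Finset X → X} {k : ℕ}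
  {u : X → ℝ} {A : Fin n → Finset X}

theorem FeasibleConfig.choice_mem (hF : FeasibleConfig B c k u A) (i : Fin n) : c (B i) ∈ B i :=
  hF.2.1 i (hF.1 i)

theorem FeasibleConfig.le_choice (hF : FeasibleConfig B c k u A) {i : Fin n} {y : X}
    (hy : y ∈ A i) : u y ≤ u (c (B i)) := by
  obtain rfl | hne := eq_or_ne y (c (B i))
  · exact le_rfl
  · exact (hF.2.2.1 i y hy hne).le

theorem Anchors.erase {j : Fin n} {D : Finset X} (h : Anchors B c u j D) {z : X}
    (hz : u (c (B j)) < u z) : Anchors B c u j (D.erase z) := by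
  refine ⟨(erase_subset _ _).trans h.1, fun w hw hwD => ?_⟩
  obtain rfl | hwz := eq_or_ne w z
  · exact hz
  · exact h.2 w hw fun hwD' => hwD (mem_erase.2 ⟨hwz, hwD'⟩)

theorem Anchors.choice_mem (hF : FeasibleConfig B c k u A) {j : Fin n} {D : Finset X}
    (h : Anchors B c u j D) : c (B j) ∈ D := by
  by_contra hc
  exact lt_irrefl _ (h.2 _ (hF.choice_mem j) hc)

theorem Anchors.subset (hF : FeasibleConfig B c k u A) {j : Fin n} {D : Finset X}
    (h : Anchors B c u j D) : A j ⊆ D := by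
  intro y hy
  by_contra hyD
  exact (h.2 y (hF.2.1 j hy) hyD).not_ge (hF.le_choice hy)

theorem Anchors.choice_eq (hF : FeasibleConfig B c k u A) {j l : Fin n} {D : Finset X}
    (hj : Anchors B c u j D) (hl : Anchors B c u l D) : c (B j) = c (B l) := by
  by_contra hne
  have hcj := hj.choice_mem hF
  have hcl := hl.choice_mem hF
  rcases hF.2.2.2.2 j l hne (mem_inter.2 ⟨hF.choice_mem j, hl.1 hcj⟩)
      (mem_inter.2 ⟨hj.1 hcl, hF.choice_mem l⟩) with ⟨z, hz⟩ | ⟨z, hz⟩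
  · simp only [mem_inter, mem_sdiff] at hz
    exact hz.2.2 (hl.1 (hj.subset hF hz.1))
  · simp only [mem_inter, mem_sdiff] at hz
    exact hz.2.2 (hj.1 (hl.subset hF hz.1))

theorem anchorFilter_of_anchors (hF : FeasibleConfig B c k u A) {j : Fin n} {D : Finset X}
    (h : Anchors B c u j D) : anchorFilter B c u D = {y ∈ D | u y ≤ u (c (B j))} := by
  have hex : ∃ j, Anchors B c u j D := ⟨j, h⟩
  rw [anchorFilter, dif_pos hex, hex.choose_spec.choice_eq hF h]

theorem FeasibleConfig.attentionFilter_anchorFilter (hF : FeasibleConfig B c k u A) :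
    AttentionFilter (anchorFilter B c u) := by
  intro D hD
  by_cases h : ∃ j, Anchors B c u j D
  · obtain ⟨j, hj⟩ := h
    rw [anchorFilter_of_anchors hF hj]
    refine ⟨⟨c (B j), mem_filter.2 ⟨hj.choice_mem hF, le_rfl⟩⟩, filter_subset _ _,
      fun z hzD hzΓ => ?_⟩
    have hz : u (c (B j)) < u z := by simpa [hzD] using hzΓ
    rw [anchorFilter_of_anchors hF (hj.erase hz), filter_erase, erase_eq_of_notMem hzΓ]
  · rw [anchorFilter_of_not_anchors h]
    exact ⟨hD, subset_rfl, fun _ hz hz' => absurd hz hz'⟩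

theorem FeasibleConfig.min_card_le_card_anchorFilter (hF : FeasibleConfig B c k u A)
    (D : Finset X) : min D.card k ≤ (anchorFilter B c u D).card := by
  by_cases h : ∃ j, Anchors B c u j D
  · obtain ⟨j, hj⟩ := h
    have hA : A j ⊆ anchorFilter B c u D := by
      rw [anchorFilter_of_anchors hF hj]
      exact fun y hy => mem_filter.2 ⟨hj.subset hF hy, hF.le_choice hy⟩
    calc min D.card k ≤ min k (B j).card :=
          min_comm (B j).card k ▸ min_le_min_right k (card_le_card hj.1)
      _ ≤ (A j).card := hF.2.2.2.1 j
      _ ≤ _ := card_le_card hA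
  · rw [anchorFilter_of_not_anchors h]
    exact min_le_left _ _

theorem FeasibleConfig.rationalizes (hF : FeasibleConfig B c k u A) (hu : Function.Injective u) :
    Rationalizes (Set.range B) c k (fun a b => u b < u a) (anchorFilter B c u) := by
  refine ⟨strictPref_of_injective_s10 hu, hF.attentionFilter_anchorFilter,
    fun D _ => hF.min_card_le_card_anchorFilter D, ?_⟩
  rintro _ ⟨i, rfl⟩
  rw [anchorFilter_of_anchors hF (anchors_self i)]
  exact ⟨mem_filter.2 ⟨hF.choice_mem i, le_rfl⟩,
    fun y hy hne => (mem_filter.1 hy).2.lt_of_ne (hu.ne hne)⟩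

end Feasible

theorem LowerContourSol.exists_rationalizes {X : Type*} [Fintype X] [DecidableEq X] {n : ℕ}
    {B : Fin n → Finset X} {c : Finset X → X} {k : ℕ} {x : X} {u : X → ℝ}
    {A : Fin n → Finset X} {s : X → Prop} (h : LowerContourSol B c k x u A s) :
    ∃ r Γ, Rationalizes (Set.range B) c k r Γ ∧ {y | r x y} ⊆ {y | y ≠ x ∧ s y} := by
  obtain ⟨hF, hsx, hclosed⟩ := h
  let e : X → Prop ×ₗ (ℝ ×ₗ Fin (Fintype.card X)) :=
    fun a => toLex (¬ s a, toLex (u a, Fintype.equivFin X a))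
  have he : Function.Injective e := fun a b hab => (by simpa [e] using hab : _ ∧ _ ∧ a = b).2.2
  obtain ⟨v, hv_inj, hv⟩ := exists_real_lt_iff_of_injective he
  have hFv : FeasibleConfig B c k v A := by
    refine ⟨hF.1, hF.2.1, fun i y hy hne => (hv _ _).2 ?_, hF.2.2.2⟩
    exact Prod.Lex.toLex_strictMono (Prod.mk_lt_mk_of_le_of_lt
      (fun hsy hsc => hsy (hclosed i y hy hsc))
      (Prod.Lex.toLex_lt_toLex.2 (Or.inl (hF.2.2.1 i y hy hne))))
  refine ⟨_, _, hFv.rationalizes hv_inj, fun y hy => ⟨fun hyx => ?_, ?_⟩⟩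
  · exact lt_irrefl (v x) (hyx ▸ hy)
  · by_contra hsy
    exact Prod.Lex.monotone_fst _ _ ((hv y x).1 hy).le hsy hsx

theorem lowerContour_bound_tight_general {X : Type*} [Fintype X] [DecidableEq X] {n : ℕ}
    (B : Fin n → Finset X) (c : Finset X → X) (k : ℕ)
    (hchoice : ∀ i, c (B i) ∈ B i)
    (hrat : RationalizableCLA (Set.range B) c k) (x : X) :
    sInf {m : ℕ | ∃ (u : X → ℝ) (A : Fin n → Finset X) (s : X → Prop),
        LowerContourSol B c k x u A s ∧ m = Set.ncard {y : X | y ≠ x ∧ s y}} =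
      sInf {m : ℕ | ∃ (r : X → X → Prop) (Γ : Finset X → Finset X),
        Rationalizes (Set.range B) c k r Γ ∧ m = Set.ncard {y : X | r x y}} ∧
    ∃ (r : X → X → Prop) (Γ : Finset X → Finset X),
      Rationalizes (Set.range B) c k r Γ ∧
      Set.ncard {y : X | r x y} =
        sInf {m : ℕ | ∃ (u : X → ℝ) (A : Fin n → Finset X) (s : X → Prop),
          LowerContourSol B c k x u A s ∧ m = Set.ncard {y : X | y ≠ x ∧ s y}} := by
  classical
  set S_sol := {m : ℕ | ∃ (u : X → ℝ) (A : Fin n → Finset X) (s : X → Prop),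
    LowerContourSol B c k x u A s ∧ m = Set.ncard {y : X | y ≠ x ∧ s y}}
  set S_rat := {m : ℕ | ∃ (r : X → X → Prop) (Γ : Finset X → Finset X),
    Rationalizes (Set.range B) c k r Γ ∧ m = Set.ncard {y : X | r x y}}
  have hsol_le : ∀ m ∈ S_sol, ∃ m' ∈ S_rat, m' ≤ m := by
    rintro _ ⟨u, A, s, hsol, rfl⟩
    obtain ⟨r, Γ, hR, hlower⟩ := hsol.exists_rationalizes
    exact ⟨_, ⟨r, Γ, hR, rfl⟩, Set.ncard_le_ncard hlower⟩
  have hrat_le : ∀ m ∈ S_rat, ∃ m' ∈ S_sol, m' ≤ m := by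
    rintro _ ⟨r, Γ, hR, rfl⟩
    refine ⟨_, ⟨_, _, _, hR.lowerContourSol_s10 hchoice x, rfl⟩, Set.ncard_le_ncard fun y hy => ?_⟩
    exact hy.2.resolve_left hy.1
  have heq : sInf S_sol = sInf S_rat := csInf_eq_csInf_of_forall_exists_le hsol_le hrat_le
  obtain ⟨r₀, Γ₀, hR₀⟩ := hrat
  obtain ⟨r, Γ, hR, hmin⟩ := Nat.sInf_mem (s := S_rat) ⟨_, r₀, Γ₀, hR₀, rfl⟩
  exact ⟨heq, r, Γ, hR, hmin ▸ heq.symm⟩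

theorem lowerContour_bound_tight {X : Type*} [Fintype X] [DecidableEq X] {n : ℕ}
    (B : Fin n → Finset X) (c : Finset X → X) (k : ℕ) (hk : 1 ≤ k)
    (hchoice : ∀ i, c (B i) ∈ B i)
    (hrat : RationalizableCLA (Set.range B) c k) (x : X) :
    sInf {m : ℕ | ∃ (u : X → ℝ) (A : Fin n → Finset X) (s : X → Prop),
        LowerContourSol B c k x u A s ∧ m = Set.ncard {y : X | y ≠ x ∧ s y}} =
      sInf {m : ℕ | ∃ (r : X → X → Prop) (Γ : Finset X → Finset X),
        Rationalizes (Set.range B) c k r Γ ∧ m = Set.ncard {y : X | r x y}} ∧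
    ∃ (r : X → X → Prop) (Γ : Finset X → Finset X),
      Rationalizes (Set.range B) c k r Γ ∧
      Set.ncard {y : X | r x y} =
        sInf {m : ℕ | ∃ (u : X → ℝ) (A : Fin n → Finset X) (s : X → Prop),
          LowerContourSol B c k x u A s ∧ m = Set.ncard {y : X | y ≠ x ∧ s y}} :=
  lowerContour_bound_tight_general B c k hchoice hrat x
end

section
/- Let X be a finite set of alternatives, let k ≥ 2 be an integer, and let (𝓑, c) be a complete data set. If (𝓑, c) is rationalizable with k-th order CLA, then c satisfies NBC and k-th order Contraction. -/
/-- No binary cycles. -/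
def NBC {X : Type*} [DecidableEq X] (c : Finset X → X) : Prop :=
  ∀ x y z : X, c {x, y} = x → c {y, z} = y → c {x, z} = x

/-- `k`-th order Contraction: for every budget `B` there are at least `min (|B|, k) - 1`
distinct elements `y ∈ B \ {c B}` with `c {c B, y} = c B`. -/
def ContractionK {X : Type*} [DecidableEq X] (𝓑 : Set (Finset X)) (c : Finset X → X)
    (k : ℕ) : Prop :=
  ∀ B ∈ 𝓑, min B.card k - 1 ≤ ((B.erase (c B)).filter fun y => c {c B, y} = c B).card

theorem cla_implies_nbc_contraction {X : Type*} [Fintype X] [DecidableEq X]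
    (𝓑 : Set (Finset X)) (c : Finset X → X) (k : ℕ) (hk : 2 ≤ k)
    (hcomplete : 𝓑 = {B : Finset X | B.Nonempty})
    (hchoice : ∀ B ∈ 𝓑, c B ∈ B)
    (hrat : RationalizableCLA 𝓑 c k) :
    NBC c ∧ ContractionK 𝓑 c k := by
  obtain ⟨r, Γ, ⟨hcomp, htrans, hasym⟩, hAF, hcard, hc⟩ := hrat
  have hmem : ∀ B : Finset X, B.Nonempty → B ∈ 𝓑 := by
    intro B hB; rw [hcomplete]; exact hB
  have hsingle : ∀ x : X, c {x} = x := by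
    intro x
    have := hchoice {x} (hmem _ (Finset.singleton_nonempty x))
    simpa using this
  -- Γ on pairs is the whole pair
  have hΓpair : ∀ x y : X, x ≠ y → Γ {x, y} = ({x, y} : Finset X) := by
    intro x y hxy
    have hne : ({x, y} : Finset X).Nonempty := ⟨x, by simp⟩
    have hsub : Γ {x, y} ⊆ {x, y} := (hAF _ hne).2.1
    have hcard2 : ({x, y} : Finset X).card = 2 := Finset.card_pair hxy
    have h2 : ({x, y} : Finset X).card ≤ (Γ {x, y}).card := by
      have := hcard {x, y} hne
      rw [hcard2] at this ⊢
      omega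
    exact Finset.eq_of_subset_of_card_le hsub h2
  have hfwd : ∀ x y : X, x ≠ y → c {x, y} = x → r x y := by
    intro x y hxy hcx
    obtain ⟨hcΓ, hdom⟩ := hc {x, y} (hmem _ ⟨x, by simp⟩)
    have hy : y ∈ Γ {x, y} := by rw [hΓpair x y hxy]; simp
    have := hdom y hy (by rw [hcx]; exact fun h => hxy h.symm)
    rwa [hcx] at this
  have hbwd : ∀ x y : X, x ≠ y → r x y → c {x, y} = x := by
    intro x y hxy hr
    have hcin := hchoice {x, y} (hmem _ ⟨x, by simp⟩)
    rcases Finset.mem_insert.1 hcin with h | h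
    · exact h
    · exfalso
      have h' : c {x, y} = y := Finset.mem_singleton.1 h
      have : c {y, x} = y := by rwa [Finset.pair_comm]
      exact hasym _ _ (hfwd y x hxy.symm this) hr
  constructor
  · intro x y z hxy hyz
    by_cases hxey : x = y
    · subst hxey
      by_cases hxez : x = z
      · subst hxez; simpa using hsingle x
      · exact hyz
    · by_cases hyez : y = z
      · subst hyez; exact hxy
      · by_cases hxez : x = z
        · subst hxez; simpa using hsingle x
        · exact hbwd x z hxez (htrans x y z (hfwd x y hxey hxy) (hfwd y z hyez hyz))
  · intro B hB
    have hBne : B.Nonempty := by rw [hcomplete] at hB; exact hB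
    obtain ⟨hcΓ, hdom⟩ := hc B hB
    have hΓsub : Γ B ⊆ B := (hAF B hBne).2.1
    have hsub : (Γ B).erase (c B) ⊆ (B.erase (c B)).filter fun y => c {c B, y} = c B := by
      intro y hy
      obtain ⟨hyne, hyΓ⟩ := Finset.mem_erase.1 hy
      refine Finset.mem_filter.2 ⟨Finset.mem_erase.2 ⟨hyne, hΓsub hyΓ⟩, ?_⟩
      exact hbwd (c B) y (fun h => hyne h.symm) (hdom y hyΓ hyne)
    have h1 : ((Γ B).erase (c B)).card = (Γ B).card - 1 :=
      Finset.card_erase_of_mem hcΓ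
    have h2 := hcard B hBne
    have := Finset.card_le_card hsub
    omega
end

section
/- Let X be a finite set of alternatives and (𝓑, c) a complete data set such that c is rational, i.e., there is a strict preference relation ≻₀ with c(B) ≻₀ y for every B ∈ 𝓑 and every y ∈ B ∖ {c(B)}. Then for EVERY strict preference relation ≻ on X, the map Γ defined by Γ(B) = {c(B)} is an attention filter and (≻, Γ) rationalizes (𝓑, c) with 1st order CLA; hence a rational data set carries no revealed preference information under the generic (first-order) CLA model. -/
theorem rational_no_revelation_first_order {X : Type*} [Fintype X] [DecidableEq X]
    (𝓑 : Set (Finset X)) (c : Finset X → X)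
    (hcomplete : 𝓑 = {B : Finset X | B.Nonempty})
    (hchoice : ∀ B ∈ 𝓑, c B ∈ B)
    (r₀ : X → X → Prop) (hr₀ : StrictPref r₀)
    (hrational : ∀ B ∈ 𝓑, ∀ y ∈ B, y ≠ c B → r₀ (c B) y) :
    ∀ r : X → X → Prop, StrictPref r →
      AttentionFilter (fun B : Finset X => {c B}) ∧
      Rationalizes 𝓑 c 1 r (fun B : Finset X => {c B}) := by
  intro r hr
  subst hcomplete
  have hAF : AttentionFilter (fun B : Finset X => {c B}) := by
    intro B hB
    refine ⟨Finset.singleton_nonempty _, ?_, ?_⟩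
    · simpa using hchoice B hB
    · intro x hx hxc
      simp only [Finset.mem_singleton] at hxc
      simp only [Finset.singleton_inj]
      have hcB : c B ∈ B := hchoice B hB
      have hcB' : c B ∈ B.erase x := Finset.mem_erase.2 ⟨fun h => hxc h.symm, hcB⟩
      have hne : (B.erase x).Nonempty := ⟨_, hcB'⟩
      have hc2 : c (B.erase x) ∈ B.erase x := hchoice _ hne
      by_contra hxy
      have h1 : r₀ (c B) (c (B.erase x)) :=
        hrational B hB _ (Finset.mem_of_mem_erase hc2) hxy
      have h2 : r₀ (c (B.erase x)) (c B) :=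
        hrational _ hne _ hcB' (fun h => hxy h.symm)
      exact hr₀.2.2 _ _ h1 h2
  refine ⟨hAF, hr, hAF, ?_, ?_⟩
  · intro B hB; simp
  · intro B hB
    exact ⟨Finset.mem_singleton_self _, fun y hy hyc => absurd (Finset.mem_singleton.1 hy) hyc⟩
end
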